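/- Let ℓ ≥ 2 and let σ be a permutation of Fin ℓ which is a cycle of length ℓ. Let k ≥ 1 and let s be a positive integer dividing ℓ. Then ∑_{e ∈ divisors of s} e * C_e(σ^{⊙k}) equals multichoose s (s*k/ℓ) if ℓ/s divides k, and equals 0 otherwise. -/
import Mathlib

/-- The `k`-th symmetric tensor power of a permutation `σ` of `Fin n`: the permutation of
`Sym (Fin n) k` sending a multiset `m` to `Sym.map σ m`. -/
def Equiv.Perm.symPow {n : ℕ} (σ : Equiv.Perm (Fin n)) (k : ℕ) :
    Equiv.Perm (Sym (Fin n) k) :=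
  (Sym.equivCongr σ : Sym (Fin n) k ≃ Sym (Fin n) k)

/-- The number of fixed points of a permutation of a finite type. -/
def fixCount {α : Type*} [Fintype α] [DecidableEq α] (τ : Equiv.Perm α) : ℕ :=
  Fintype.card {x : α // τ x = x}

/-- `cycleCount τ s` is the number of cycles of length `s` in the cycle decomposition of `τ`;
for `s = 1` this is the number of fixed points. -/
def cycleCount {α : Type*} [Fintype α] [DecidableEq α] (τ : Equiv.Perm α) (s : ℕ) : ℕ :=
  if s = 1 then fixCount τ
  else (τ.cycleFactorsFinset.filter (fun c => c.support.card = s)).card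

set_option linter.unusedSectionVars false

open Equiv Equiv.Perm Finset

section PartA


variable {α : Type*} [Fintype α] [DecidableEq α]

lemma fixCount_eq_card_filter (τ : Equiv.Perm α) :
    fixCount τ = (Finset.univ.filter fun x => τ x = x).card := by
  rw [fixCount, Fintype.card_subtype]

lemma sum_divisors_cycleCount (τ : Equiv.Perm α) {s : ℕ} (hs : 0 < s) :
    ∑ e ∈ s.divisors, e * cycleCount τ e = fixCount (τ ^ s) := by
  classical
  set P : α → Prop := fun x => (τ ^ s) x = x with hP
  have hsplit : (univ.filter P).card
      = (univ.filter fun x => τ x = x).card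
        + ((τ.cycleFactorsFinset.filter fun c => c.support.card ∣ s).biUnion
            fun c => c.support).card := by
    have h1 : univ.filter (fun x => P x ∧ τ x = x) = univ.filter (fun x => τ x = x) := by
      ext x
      simp only [mem_filter, mem_univ, true_and, hP]
      exact ⟨fun h => h.2, fun h => ⟨pow_apply_eq_self_of_apply_eq_self h s, h⟩⟩
    have h2 : univ.filter (fun x => P x ∧ ¬ τ x = x)
        = (τ.cycleFactorsFinset.filter fun c => c.support.card ∣ s).biUnion
            fun c => c.support := by
      ext x
      simp only [mem_filter, mem_univ, true_and, mem_biUnion, hP]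
      constructor
      · rintro ⟨hpx, hx⟩
        refine ⟨τ.cycleOf x, ⟨cycleOf_mem_cycleFactorsFinset_iff.mpr
          (mem_support.mpr hx), ?_⟩, mem_support_cycleOf_iff.mpr ⟨SameCycle.refl _ _,
          mem_support.mpr hx⟩⟩
        have hcyc : (τ.cycleOf x).IsCycle := isCycle_cycleOf τ hx
        have hon : (τ.cycleOf x).IsCycleOn ((τ.cycleOf x).support : Set α) := by
          rw [coe_support_eq_set_support]; exact hcyc.isCycleOn
        have hmem : x ∈ (τ.cycleOf x).support :=
          mem_support_cycleOf_iff.mpr ⟨SameCycle.refl _ _, mem_support.mpr hx⟩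
        have := (hon.pow_apply_eq hmem (n := s)).mp ?_
        · exact this
        · rw [cycleOf_pow_apply_self]; exact hpx
      · rintro ⟨c, ⟨hcf, hdvd⟩, hxc⟩
        have hceq : c = τ.cycleOf x := cycle_is_cycleOf hxc hcf
        have hcyc : c.IsCycle := (mem_cycleFactorsFinset_iff.mp hcf).1
        have hon : c.IsCycleOn (c.support : Set α) := by
          rw [coe_support_eq_set_support]; exact hcyc.isCycleOn
        have hpow : (c ^ s) x = x := (hon.pow_apply_eq hxc).mpr hdvd
        constructor
        · rw [hceq, cycleOf_pow_apply_self] at hpow; exact hpow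
        · have : x ∈ τ.support := by
            rw [hceq] at hxc
            exact (mem_support_cycleOf_iff.mp hxc).2
          exact mem_support.mp this
    rw [← h1, ← h2, ← card_union_of_disjoint, filter_union_right]
    · congr 1
      ext x; by_cases h : τ x = x <;> simp [h]
    · rw [disjoint_filter]
      rintro x - ⟨-, hx⟩ ⟨-, hx'⟩
      exact hx' hx
  have hdisj : ((τ.cycleFactorsFinset.filter fun c => c.support.card ∣ s).biUnion
      fun c => c.support).card
      = ∑ c ∈ τ.cycleFactorsFinset.filter (fun c => c.support.card ∣ s), c.support.card := by
    apply card_biUnion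
    intro c hc d hd hcd
    exact Disjoint.disjoint_support
      ((cycleFactorsFinset_pairwise_disjoint τ) (mem_filter.mp hc).1 (mem_filter.mp hd).1 hcd)
  have hgroup : ∑ c ∈ τ.cycleFactorsFinset.filter (fun c => c.support.card ∣ s), c.support.card
      = ∑ e ∈ s.divisors.erase 1, e * cycleCount τ e := by
    have hmaps : ∀ c ∈ τ.cycleFactorsFinset.filter (fun c => c.support.card ∣ s),
        c.support.card ∈ s.divisors.erase 1 := by
      intro c hc
      rw [mem_filter] at hc
      refine Finset.mem_erase.mpr ⟨?_, Nat.mem_divisors.mpr ⟨hc.2, hs.ne'⟩⟩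
      have := (mem_cycleFactorsFinset_iff.mp hc.1).1.two_le_card_support
      omega
    rw [← Finset.sum_fiberwise_of_maps_to hmaps (fun c => c.support.card)]
    apply Finset.sum_congr rfl
    intro e he
    have he1 : e ≠ 1 := (Finset.mem_erase.mp he).1
    rw [cycleCount, if_neg he1]
    have heq : (τ.cycleFactorsFinset.filter fun c => c.support.card ∣ s).filter
        (fun c => c.support.card = e)
        = τ.cycleFactorsFinset.filter (fun c => c.support.card = e) := by
      rw [filter_filter]
      apply filter_congr
      intro c hc
      have hedvd : e ∣ s := (Nat.mem_divisors.mp (Finset.mem_erase.mp he).2).1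
      constructor
      · rintro ⟨-, h⟩; exact h
      · rintro h; exact ⟨h ▸ hedvd, h⟩
    rw [heq, Finset.sum_congr rfl (fun c hc => (mem_filter.mp hc).2), Finset.sum_const,
      smul_eq_mul, mul_comm]
  have h1mem : 1 ∈ s.divisors := Nat.one_mem_divisors.mpr hs.ne'
  rw [← Finset.add_sum_erase _ _ h1mem]
  rw [fixCount_eq_card_filter, hsplit, hdisj, hgroup, one_mul, cycleCount, if_pos rfl,
    fixCount_eq_card_filter]

end PartA

section PartB

variable {α : Type*} [Fintype α] [DecidableEq α] (ρ : Equiv.Perm α)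

/-- quotient by the same-cycle relation -/
abbrev OrbQ (ρ : Equiv.Perm α) : Type _ := Quotient (Equiv.Perm.SameCycle.setoid ρ)

/-- class of a point -/
abbrev qmk (x : α) : OrbQ ρ := Quotient.mk (Equiv.Perm.SameCycle.setoid ρ) x

lemma qmk_eq_iff {x y : α} : qmk ρ x = qmk ρ y ↔ ρ.SameCycle x y := by
  constructor
  · exact fun h => Quotient.exact h
  · exact fun h => Quotient.sound h

instance : DecidableEq (OrbQ ρ) := fun a b =>
  Quotient.recOnSubsingleton₂ a b fun x y =>
    decidable_of_iff (ρ.SameCycle x y) (qmk_eq_iff ρ).symm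

instance : Fintype (OrbQ ρ) :=
  Fintype.ofSurjective (qmk ρ) (fun q => Quotient.inductionOn q fun x => ⟨x, rfl⟩)

/-- the fiber of a class, as a multiset -/
def fibM (q : OrbQ ρ) : Multiset α := (Finset.univ.filter (fun y => qmk ρ y = q)).val

lemma nodup_fibM (q : OrbQ ρ) : (fibM ρ q).Nodup := (Finset.univ.filter _).nodup

lemma mem_fibM {y : α} {q : OrbQ ρ} : y ∈ fibM ρ q ↔ qmk ρ y = q := by
  simp [fibM, Finset.mem_filter]

lemma count_fibM (y : α) (q : OrbQ ρ) :
    Multiset.count y (fibM ρ q) = if qmk ρ y = q then 1 else 0 := by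
  split_ifs with h
  · exact Multiset.count_eq_one_of_mem (nodup_fibM ρ q) (mem_fibM ρ |>.mpr h)
  · exact Multiset.count_eq_zero.mpr (fun hy => h ((mem_fibM ρ).mp hy))

lemma map_fibM (q : OrbQ ρ) : Multiset.map ρ (fibM ρ q) = fibM ρ q := by
  refine Multiset.Nodup.ext ((nodup_fibM ρ q).map ρ.injective) (nodup_fibM ρ q) |>.mpr ?_
  intro a
  simp only [Multiset.mem_map, mem_fibM]
  constructor
  · rintro ⟨b, hb, rfl⟩
    rw [← hb]
    exact (qmk_eq_iff ρ).mpr (SameCycle.symm ⟨1, by simp⟩)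
  · intro ha
    refine ⟨ρ⁻¹ a, ?_, by simp⟩
    rw [← ha]
    exact (qmk_eq_iff ρ).mpr ⟨1, by simp⟩

lemma count_bind_fibM (g : Multiset (OrbQ ρ)) (y : α) :
    Multiset.count y (g.bind (fibM ρ)) = Multiset.count (qmk ρ y) g := by
  induction g using Multiset.induction_on with
  | empty => simp
  | cons q g ih =>
    rw [Multiset.cons_bind, Multiset.count_add, ih, Multiset.count_cons, count_fibM]
    by_cases h : qmk ρ y = q <;> simp [h, add_comm]


lemma count_const_of_fixed {m : Multiset α} (hm : Multiset.map ρ m = m)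
    {x y : α} (h : ρ.SameCycle x y) : m.count x = m.count y := by
  have step : ∀ z : α, m.count (ρ z) = m.count z := by
    intro z
    conv_lhs => rw [← hm]
    exact Multiset.count_map_eq_count' ρ m ρ.injective z
  have pow : ∀ (n : ℕ) (z : α), m.count ((ρ ^ n) z) = m.count z := by
    intro n
    induction n with
    | zero => simp
    | succ n ih => intro z; rw [pow_succ, Equiv.Perm.mul_apply, ih (ρ z), step]
  obtain ⟨i, -, rfl⟩ := h.exists_pow_eq'
  exact (pow i x).symm

/-- count function on classes -/
def cfun (m : Multiset α) (hm : Multiset.map ρ m = m) : OrbQ ρ → ℕ :=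
  Quotient.lift (fun x => m.count x) (fun _ _ h => count_const_of_fixed ρ hm h)

lemma cfun_mk (m : Multiset α) (hm : Multiset.map ρ m = m) (x : α) :
    cfun ρ m hm (qmk ρ x) = m.count x := rfl

lemma sum_count_univ (m : Multiset α) : ∑ x : α, m.count x = Multiset.card m := by
  rw [← Multiset.toFinset_sum_count_eq m]
  exact (Finset.sum_subset (Finset.subset_univ _)
    (fun x _ hx => Multiset.count_eq_zero.mpr (by simpa using hx))).symm

variable {u : ℕ} (hfix : ∀ (x : α) (n : ℕ), (ρ ^ n) x = x ↔ u ∣ n) (hu : 0 < u)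

include hfix hu

lemma card_fibM (q : OrbQ ρ) : Multiset.card (fibM ρ q) = u := by
  induction q using Quotient.inductionOn with
  | h x =>
    have : Finset.univ.filter (fun y => qmk ρ y = qmk ρ x)
        = (Finset.range u).image (fun n => (ρ ^ n) x) := by
      ext y
      simp only [Finset.mem_filter, Finset.mem_univ, true_and, Finset.mem_image,
        Finset.mem_range, qmk_eq_iff]
      constructor
      · intro h
        obtain ⟨i, -, rfl⟩ := h.symm.exists_pow_eq'
        refine ⟨i % u, Nat.mod_lt _ hu, ?_⟩
        conv_rhs => rw [← Nat.mod_add_div i u]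
        rw [pow_add, Equiv.Perm.mul_apply, (hfix x (u * (i / u))).mpr ⟨i / u, rfl⟩]
      · rintro ⟨n, -, rfl⟩
        exact SameCycle.symm ⟨(n : ℤ), by rw [zpow_natCast]⟩
    have hinj : Set.InjOn (fun n => (ρ ^ n) x) (Finset.range u) := by
      have key : ∀ a b : ℕ, a ≤ b → b < u → (ρ ^ a) x = (ρ ^ b) x → a = b := by
        intro a b hab hbu he
        have : (ρ ^ (b - a)) ((ρ ^ a) x) = (ρ ^ a) x := by
          rw [← Equiv.Perm.mul_apply, ← pow_add, Nat.sub_add_cancel hab, ← he]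
        have h2 := (hfix _ _).mp this
        have h3 : b - a = 0 := Nat.eq_zero_of_dvd_of_lt h2 (by omega)
        omega
      intro a ha b hb he
      simp only [Finset.coe_range, Set.mem_Iio] at ha hb
      rcases le_total a b with h | h
      · exact key a b h hb he
      · exact (key b a h ha he.symm).symm
    rw [fibM]
    show Multiset.card (Finset.univ.filter (fun y => qmk ρ y = qmk ρ x)).val = u
    rw [← Finset.card_def, this, Finset.card_image_of_injOn hinj, Finset.card_range]

lemma card_orbQ : Fintype.card (OrbQ ρ) * u = Fintype.card α := by
  have h1 := Finset.card_eq_sum_card_fiberwise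
    (f := fun x : α => qmk ρ x) (s := Finset.univ) (t := Finset.univ)
    (fun x _ => Finset.mem_univ _)
  have h2 : ∀ q : OrbQ ρ, (Finset.univ.filter (fun a => qmk ρ a = q)).card = u := by
    intro q
    rw [Finset.card_def, ← fibM]
    exact card_fibM ρ hfix hu q
  rw [← Finset.card_univ (α := α), h1, Finset.sum_congr rfl (fun q _ => h2 q),
    Finset.sum_const, Finset.card_univ, smul_eq_mul]

lemma card_mul_sum_cfun (m : Multiset α) (hm : Multiset.map ρ m = m) :
    u * ∑ q : OrbQ ρ, cfun ρ m hm q = Multiset.card m := by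
  rw [← sum_count_univ m,
    ← Finset.sum_fiberwise_of_maps_to (g := fun x : α => qmk ρ x)
      (fun x _ => Finset.mem_univ _) (fun x => m.count x), Finset.mul_sum]
  apply Finset.sum_congr rfl
  intro q _
  have hcount : ∀ x ∈ Finset.univ.filter (fun x => qmk ρ x = q), m.count x = cfun ρ m hm q := by
    intro x hx
    rw [← (Finset.mem_filter.mp hx).2, cfun_mk]
  rw [Finset.sum_congr rfl hcount, Finset.sum_const, smul_eq_mul]
  congr 1
  rw [Finset.card_def, ← fibM]
  exact (card_fibM ρ hfix hu q).symm


omit hfix hu in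
lemma count_sum_replicate (f : OrbQ ρ → ℕ) (q : OrbQ ρ) :
    Multiset.count q (∑ q' : OrbQ ρ, Multiset.replicate (f q') q') = f q := by
  simp [Multiset.count_sum', Multiset.count_replicate]

omit hfix hu in
lemma card_sum_replicate (f : OrbQ ρ → ℕ) :
    Multiset.card (∑ q' : OrbQ ρ, Multiset.replicate (f q') q') = ∑ q' : OrbQ ρ, f q' := by
  induction (Finset.univ : Finset (OrbQ ρ)) using Finset.cons_induction with
  | empty => simp
  | cons q t hq ih => rw [Finset.sum_cons, Finset.sum_cons, Multiset.card_add,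
      Multiset.card_replicate, ih]

omit hfix hu in
/-- structural equivalence between fixed points at the `Sym` level and multiset level -/
def symFixedEquiv (k : ℕ) : {m : Sym α k // Sym.map ρ m = m}
    ≃ {m : Multiset α // Multiset.card m = k ∧ Multiset.map ρ m = m} where
  toFun m := ⟨m.1.1, m.1.2, congrArg Sym.toMultiset m.2⟩
  invFun m := ⟨⟨m.1, m.2.1⟩, Subtype.ext m.2.2⟩
  left_inv m := rfl
  right_inv m := rfl

/-- the bijection between fixed multisets and multisets of orbits -/
def fixedEquivSym {k d : ℕ} (hkd : k = u * d) :
    {m : Multiset α // Multiset.card m = k ∧ Multiset.map ρ m = m} ≃ Sym (OrbQ ρ) d where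
  toFun m := ⟨∑ q : OrbQ ρ, Multiset.replicate (cfun ρ m.1 m.2.2 q) q, by
    rw [card_sum_replicate]
    have h1 : u * ∑ q : OrbQ ρ, cfun ρ m.1 m.2.2 q = u * d := by
      rw [card_mul_sum_cfun ρ hfix hu m.1 m.2.2, m.2.1, hkd]
    exact Nat.eq_of_mul_eq_mul_left hu h1⟩
  invFun g := ⟨g.1.bind (fibM ρ), by
    rw [Multiset.card_bind,
      Multiset.map_congr rfl (fun q _ => show (Multiset.card ∘ fibM ρ) q = u from
        card_fibM ρ hfix hu q),
      Multiset.map_const', Multiset.sum_replicate, smul_eq_mul, g.2, hkd, mul_comm], by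
    rw [Multiset.map_bind]
    exact Multiset.bind_congr (fun q _ => map_fibM ρ q)⟩
  left_inv m := by
    apply Subtype.ext
    apply Multiset.ext.mpr
    intro y
    rw [count_bind_fibM, count_sum_replicate ρ, cfun_mk]
  right_inv g := by
    apply Subtype.ext
    apply Multiset.ext.mpr
    intro q
    rw [count_sum_replicate ρ]
    induction q using Quotient.inductionOn with
    | h x => rw [show Quotient.mk _ x = qmk ρ x from rfl, cfun_mk, count_bind_fibM]

lemma card_fixed_sym (k : ℕ) :
    Fintype.card {m : Sym α k // Sym.map ρ m = m}
      = if u ∣ k then Nat.multichoose (Fintype.card α / u) (k / u) else 0 := by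
  split_ifs with h
  · obtain ⟨d, rfl⟩ := h
    rw [Fintype.card_congr ((symFixedEquiv ρ (u * d)).trans (fixedEquivSym ρ hfix hu rfl)),
      Sym.card_sym_eq_multichoose]
    congr 1
    · rw [← card_orbQ ρ hfix hu, Nat.mul_div_cancel _ hu]
    · rw [Nat.mul_div_cancel_left _ hu]
  · rw [Fintype.card_eq_zero_iff]
    refine ⟨fun m => ?_⟩
    obtain ⟨m', hcard, hfixm⟩ := symFixedEquiv ρ k m
    exact absurd ⟨∑ q : OrbQ ρ, cfun ρ m' hfixm q,
      by rw [← hcard, ← card_mul_sum_cfun ρ hfix hu m' hfixm]⟩ h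

end PartB

lemma symPow_apply {n k : ℕ} (σ : Equiv.Perm (Fin n)) (m : Sym (Fin n) k) :
    σ.symPow k m = Sym.map σ m := rfl

lemma symPow_pow {n k : ℕ} (σ : Equiv.Perm (Fin n)) (s : ℕ) :
    (σ.symPow k) ^ s = (σ ^ s).symPow k := by
  induction s with
  | zero =>
    refine Equiv.ext fun m => ?_
    rw [pow_zero, pow_zero]
    show m = Sym.map (⇑(1 : Equiv.Perm (Fin n))) m
    simp
  | succ n ih =>
    refine Equiv.ext fun m => ?_
    rw [pow_succ, Equiv.Perm.mul_apply, ih, symPow_apply, symPow_apply, symPow_apply,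
      Sym.map_map, pow_succ, Equiv.Perm.coe_mul]

/-- Divisor-sum identity for the cycle counts of the symmetric tensor power of a full cycle on
`Fin ℓ`. -/
theorem divisor_sum_cycleCount_symPow (ℓ : ℕ) (hℓ : 2 ≤ ℓ) (σ : Equiv.Perm (Fin ℓ))
    (hc : σ.IsCycle) (hs : σ.support.card = ℓ) (k s : ℕ) (hk : 1 ≤ k) (hs1 : 0 < s)
    (hsl : s ∣ ℓ) :
    ∑ e ∈ s.divisors, e * cycleCount (σ.symPow k) e =
      if ℓ / s ∣ k then Nat.multichoose s (s * k / ℓ) else 0 := by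
  classical
  obtain ⟨u, rfl⟩ := hsl
  have hu : 0 < u := by
    rcases Nat.eq_zero_or_pos u with h | h
    · subst h; omega
    · exact h
  have hus : s * u / s = u := Nat.mul_div_cancel_left u hs1
  have hσfix : ∀ (x : Fin (s * u)) (n : ℕ), (σ ^ n) x = x ↔ s * u ∣ n := by
    intro x n
    have hσsupp : σ.support = Finset.univ := Finset.eq_univ_of_card _ (by simp [hs])
    have hon : σ.IsCycleOn (σ.support : Set (Fin (s * u))) := by
      rw [Equiv.Perm.coe_support_eq_set_support]; exact hc.isCycleOn
    have := hon.pow_apply_eq (a := x) (by rw [hσsupp]; exact Finset.mem_univ x) (n := n)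
    rwa [hs] at this
  have hufix : ∀ (x : Fin (s * u)) (n : ℕ), ((σ ^ s) ^ n) x = x ↔ u ∣ n := by
    intro x n
    rw [← pow_mul, hσfix, Nat.mul_dvd_mul_iff_left hs1]
  rw [sum_divisors_cycleCount _ hs1, symPow_pow]
  have hcard : fixCount ((σ ^ s).symPow k)
      = Fintype.card {m : Sym (Fin (s * u)) k // Sym.map (σ ^ s) m = m} := by
    rw [fixCount]
    exact Fintype.card_congr (Equiv.subtypeEquivRight (fun m => Iff.rfl))
  rw [hcard, card_fixed_sym (σ ^ s) hufix hu k, Fintype.card_fin, hus]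
  have h1 : s * u / u = s := Nat.mul_div_cancel _ hu
  have h2 : s * k / (s * u) = k / u := Nat.mul_div_mul_left k u hs1
  rw [h1, h2]
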